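/- arXiv:2002.09705 — 3 statements merged into one kernel-verified Lean document; each statement's English description precedes it below -/
import Mathlib

section
/- For every real λ > 0, the quantity g(λ) := e^{-λ} - (1 - e^{-λ})/λ satisfies |g(λ)| < 0.3. -/
/-!
Write `g(λ) = ((1 + λ) e^{-λ} - 1) / λ`. Since `1 + λ ≤ e^λ`, `g ≤ 0`, and the lower bound
`g > -0.3` amounts to `1 - 0.3 λ < f(λ) := (1 + λ) e^{-λ}`. As `f'' = (λ - 1) e^{-λ}`, `f` is
concave on `(-∞, 1]`, where it lies above its chord through `0` and `1`, and convex on `[1, ∞)`,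
where it lies above its tangent at `9/5`. Comparing these two lines with `1 - 0.3 λ` needs only
`e < 20/7` and `e^{9/5} < 212/35`. The tangent point is close to the minimiser `λ ≈ 1.79` of `g`,
where `g ≈ -0.2984`, so there is little room in this second estimate.
-/

open Real Set

theorem ConvexOn.add_deriv_mul_sub_le {S : Set ℝ} {f : ℝ → ℝ} {x y f' : ℝ}
    (hfc : ConvexOn ℝ S f) (hx : x ∈ S) (hy : y ∈ S) (hf : HasDerivAt f f' x) :
    f x + f' * (y - x) ≤ f y := by
  rcases lt_trichotomy x y with hxy | rfl | hyx
  · have h := hfc.le_slope_of_hasDerivAt hx hy hxy hf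
    rw [slope_def_field, le_div_iff₀ (sub_pos.2 hxy)] at h
    linarith
  · simp
  · have h := hfc.slope_le_of_hasDerivAt hy hx hyx hf
    rw [slope_def_field, div_le_iff₀ (sub_pos.2 hyx)] at h
    linarith

theorem hasDerivAt_one_add_mul_exp_neg (x : ℝ) :
    HasDerivAt (fun x ↦ (1 + x) * exp (-x)) (-(x * exp (-x))) x :=
  (((hasDerivAt_id' x).const_add 1).mul (hasDerivAt_neg' x).exp).congr_deriv (by ring)

theorem hasDerivAt_neg_mul_exp_neg (x : ℝ) :
    HasDerivAt (fun x ↦ -(x * exp (-x))) ((x - 1) * exp (-x)) x :=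
  ((hasDerivAt_id' x).mul (hasDerivAt_neg' x).exp).neg.congr_deriv (by ring)

theorem concaveOn_one_add_mul_exp_neg : ConcaveOn ℝ (Iic 1) (fun x ↦ (1 + x) * exp (-x)) := by
  refine concaveOn_of_hasDerivWithinAt2_nonpos (convex_Iic 1) (by fun_prop)
    (fun x _ ↦ (hasDerivAt_one_add_mul_exp_neg x).hasDerivWithinAt)
    (fun x _ ↦ (hasDerivAt_neg_mul_exp_neg x).hasDerivWithinAt) fun x hx ↦ ?_
  rw [interior_Iic] at hx
  exact mul_nonpos_of_nonpos_of_nonneg (by linarith [hx.out]) (exp_pos _).le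

theorem convexOn_one_add_mul_exp_neg : ConvexOn ℝ (Ici 1) (fun x ↦ (1 + x) * exp (-x)) := by
  refine convexOn_of_hasDerivWithinAt2_nonneg (convex_Ici 1) (by fun_prop)
    (fun x _ ↦ (hasDerivAt_one_add_mul_exp_neg x).hasDerivWithinAt)
    (fun x _ ↦ (hasDerivAt_neg_mul_exp_neg x).hasDerivWithinAt) fun x hx ↦ ?_
  rw [interior_Ici] at hx
  exact mul_nonneg (by linarith [hx.out]) (exp_pos _).le

theorem exp_nine_fifths_lt : exp (9 / 5) < 212 / 35 := by
  have h := exp_bound' (x := 4 / 5) (by norm_num) (by norm_num) (n := 5) (by norm_num)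
  norm_num [Finset.sum_range_succ, Nat.factorial] at h
  have he := exp_one_lt_d9
  rw [show (9 / 5 : ℝ) = 1 + 4 / 5 by norm_num, exp_add]
  calc exp 1 * exp (4 / 5) ≤ 2.7182818286 * exp (4 / 5) := by gcongr
    _ < 212 / 35 := by nlinarith

theorem one_add_mul_exp_neg_le_one (x : ℝ) : (1 + x) * exp (-x) ≤ 1 := by
  rw [← le_div_iff₀ (exp_pos _), exp_neg, div_inv_eq_mul, one_mul, add_comm]
  exact add_one_le_exp x

theorem one_sub_mul_lt_one_add_mul_exp_neg {x : ℝ} (hx : 0 < x) :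
    1 - 3 / 10 * x < (1 + x) * exp (-x) := by
  rcases le_total x 1 with hx1 | hx1
  · have hchord : 1 - x + x * (2 * exp (-1)) ≤ (1 + x) * exp (-x) := by
      have h := concaveOn_one_add_mul_exp_neg.2 (by simp : (0 : ℝ) ∈ Iic 1)
        (by simp : (1 : ℝ) ∈ Iic 1) (by linarith : 0 ≤ 1 - x) hx.le (by ring)
      norm_num at h
      linarith
    have he : 7 / 20 < exp (-1) := by
      rw [exp_neg, lt_inv_comm₀ (by norm_num) (exp_pos 1)]
      exact exp_one_lt_d9.trans (by norm_num)
    nlinarith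
  rcases le_total x (10 / 3) with hx2 | hx2
  · have htangent : exp (-(9 / 5)) * (151 / 25 - 9 / 5 * x) ≤ (1 + x) * exp (-x) := by
      have h := convexOn_one_add_mul_exp_neg.add_deriv_mul_sub_le (by norm_num) hx1
        (hasDerivAt_one_add_mul_exp_neg (9 / 5))
      linarith
    have he : 35 / 212 < exp (-(9 / 5)) := by
      rw [exp_neg, lt_inv_comm₀ (by norm_num) (exp_pos _)]
      exact exp_nine_fifths_lt.trans_eq (by norm_num)
    have hpos : 0 < 151 / 25 - 9 / 5 * x := by linarith
    nlinarith [mul_lt_mul_of_pos_right he hpos]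
  · nlinarith [exp_pos (-x)]

/-- The per-cycle error amplification factor
`g(λ) = e^{-λ} - (1 - e^{-λ})/λ` of the averaging scheme satisfies `|g(λ)| < 0.3` for
every `λ > 0`. -/
theorem candy_wrapper_stmt3 :
    ∀ lam : ℝ, 0 < lam →
      |Real.exp (-lam) - (1 - Real.exp (-lam)) / lam| < 0.3 := by
  intro lam hlam
  have hg : Real.exp (-lam) - (1 - Real.exp (-lam)) / lam
      = ((1 + lam) * Real.exp (-lam) - 1) / lam := by
    field_simp; ring
  rw [hg, abs_lt, lt_div_iff₀ hlam, div_lt_iff₀ hlam]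
  constructor
  · linarith [one_sub_mul_lt_one_add_mul_exp_neg hlam]
  · linarith [one_add_mul_exp_neg_le_one lam]
end

section
/- Let A be a symmetric positive definite real n×n matrix. Then the matrix L := exp(-A) - A⁻¹ (I - exp(-A)) is symmetric and its operator norm (with respect to the Euclidean norm on ℝⁿ) satisfies ‖L‖ < 0.3. -/
/-!
By the spectral theorem `L = g(A)` with `g(λ) = e^{-λ} - (1 - e^{-λ})/λ`, so `L` is symmetric
and `‖L‖ = max |g(λᵢ)|` over the eigenvalues `λᵢ > 0` of `A`. Since
`g(λ) = (λ + 1 - e^λ) / (λ e^λ)`, the bound `g < 0` is `1 + λ < e^λ`, and `g > -0.3` is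
`(1 - 0.3 λ) e^λ < 1 + λ`. The latter is trivial for `λ ≥ 10/3`; on `[k, k + 1]` it follows from
`e^{k + t} ≤ e^k · T(t)`, with `T` a Taylor majorant of `exp` on `[0, 1]`, and a polynomial
inequality in `t`. The margin is thin: `g` attains its minimum `≈ -0.2984` near `λ ≈ 1.79`.
-/

open Real

noncomputable def expMajorant (t : ℝ) : ℝ :=
  1 + t + t ^ 2 / 2 + t ^ 3 / 6 + t ^ 4 / 24 + t ^ 5 / 120 + t ^ 6 * 7 / 4320

lemma exp_le_expMajorant {t : ℝ} (ht0 : 0 ≤ t) (ht1 : t ≤ 1) : exp t ≤ expMajorant t := by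
  have h := exp_bound' ht0 ht1 (n := 6) (by norm_num)
  norm_num [Finset.sum_range_succ, Nat.factorial] at h
  rw [expMajorant]
  linarith

lemma exp_nat_add_le (k : ℕ) {t : ℝ} (ht0 : 0 ≤ t) (ht1 : t ≤ 1) :
    exp (k + t) ≤ 2.7182818286 ^ k * expMajorant t := by
  rw [exp_add, ← exp_one_pow]
  gcongr
  · exact exp_one_lt_d9.le
  · exact exp_le_expMajorant ht0 ht1

lemma one_sub_mul_expMajorant_lt {k : ℕ} {t : ℝ} (hk : k ≤ 3) (ht0 : 0 ≤ t) (ht1 : t ≤ 1)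
    (hpos : 0 < k + t) (hle : k + t ≤ 10 / 3) :
    (1 - 0.3 * (k + t)) * (2.7182818286 ^ k * expMajorant t) < k + t + 1 := by
  have h1t := sub_nonneg.2 ht1
  interval_cases k <;> norm_num [expMajorant] at hpos hle ⊢
  · nlinarith [mul_nonneg ht0 h1t, mul_nonneg (pow_nonneg ht0 2) h1t, pow_nonneg ht0 4,
      pow_nonneg ht0 5, pow_nonneg ht0 6, pow_nonneg ht0 7]
  · nlinarith [sq_nonneg (t - 17 / 20), mul_nonneg ht0 h1t, sq_nonneg t,
      mul_nonneg (pow_nonneg ht0 2) h1t, mul_nonneg (pow_nonneg ht0 3) h1t,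
      mul_nonneg (pow_nonneg ht0 4) h1t, mul_nonneg (pow_nonneg ht0 5) h1t, pow_nonneg ht0 4]
  · nlinarith [sq_nonneg (t - 1 / 2), mul_nonneg ht0 h1t, sq_nonneg t,
      mul_nonneg (pow_nonneg ht0 2) h1t, mul_nonneg (pow_nonneg ht0 3) h1t,
      mul_nonneg (pow_nonneg ht0 4) h1t, mul_nonneg (pow_nonneg ht0 5) h1t, pow_nonneg ht0 4]
  · have h3t : 0 ≤ 1 / 3 - t := by linarith
    nlinarith [mul_nonneg ht0 h3t, sq_nonneg t,
      mul_nonneg (pow_nonneg ht0 2) h3t, mul_nonneg (pow_nonneg ht0 3) h3t,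
      mul_nonneg (pow_nonneg ht0 4) h3t, mul_nonneg (pow_nonneg ht0 5) h3t, pow_nonneg ht0 4]

lemma one_sub_mul_exp_lt {x : ℝ} (hx : 0 < x) : (1 - 0.3 * x) * exp x < x + 1 := by
  rcases le_or_gt (10 / 3) x with hx' | hx'
  · nlinarith [exp_pos x]
  obtain ⟨k, t, rfl, ht0, ht1⟩ : ∃ k : ℕ, ∃ t : ℝ, x = k + t ∧ 0 ≤ t ∧ t < 1 :=
    ⟨⌊x⌋₊, x - ⌊x⌋₊, by ring, sub_nonneg.2 (Nat.floor_le hx.le),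
      by linarith [Nat.lt_floor_add_one x]⟩
  have hk : k ≤ 3 := by
    have : (k : ℝ) < 4 := by linarith
    exact Nat.lt_succ_iff.mp (by exact_mod_cast this)
  calc (1 - 0.3 * (k + t)) * exp (k + t)
      ≤ (1 - 0.3 * (k + t)) * (2.7182818286 ^ k * expMajorant t) :=
        mul_le_mul_of_nonneg_left (exp_nat_add_le k ht0 ht1.le) (by linarith)
    _ < k + t + 1 := one_sub_mul_expMajorant_lt hk ht0 ht1.le hx hx'.le

noncomputable def averagingMultiplier (x : ℝ) : ℝ := exp (-x) - x⁻¹ * (1 - exp (-x))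

lemma averagingMultiplier_eq {x : ℝ} (hx : x ≠ 0) :
    averagingMultiplier x = (x + 1 - exp x) / (x * exp x) := by
  rw [averagingMultiplier, exp_neg]
  field_simp
  ring

lemma abs_averagingMultiplier_lt {x : ℝ} (hx : 0 < x) : |averagingMultiplier x| < 0.3 := by
  have hden : 0 < x * exp x := by positivity
  rw [averagingMultiplier_eq hx.ne', abs_lt, lt_div_iff₀ hden, div_lt_iff₀ hden]
  constructor
  · nlinarith [one_sub_mul_exp_lt hx]
  · linarith [add_one_lt_exp hx.ne']

open scoped Matrix.Norms.L2Operator in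
lemma Matrix.IsHermitian.l2_opNorm_cfc_lt {ι 𝕜 : Type*} [RCLike 𝕜] [Fintype ι] [DecidableEq ι]
    {A : Matrix ι ι 𝕜} (hA : A.IsHermitian) {f : ℝ → ℝ} {c : ℝ} (hc : 0 < c)
    (hf : ∀ i, |f (hA.eigenvalues i)| < c) : ‖cfc f A‖ < c := by
  rw [hA.cfc_eq, Matrix.IsHermitian.cfc, Unitary.conjStarAlgAut_apply,
    CStarRing.norm_mul_mem_unitary _ (Unitary.star_mem hA.eigenvectorUnitary.2),
    CStarRing.norm_mem_unitary_mul _ hA.eigenvectorUnitary.2, l2_opNorm_diagonal,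
    pi_norm_lt_iff hc]
  intro i
  simpa using hf i

open scoped Matrix.Norms.L2Operator in
lemma Matrix.PosDef.cfc_averagingMultiplier {ι : Type*} [Fintype ι] [DecidableEq ι]
    {A : Matrix ι ι ℝ} (hA : A.PosDef) :
    cfc averagingMultiplier A = NormedSpace.exp (-A) - A⁻¹ * (1 - NormedSpace.exp (-A)) := by
  have hsa : IsSelfAdjoint A := hA.isHermitian.isSelfAdjoint
  have hcont (f : ℝ → ℝ) : ContinuousOn f (spectrum ℝ A) := A.finite_real_spectrum.continuousOn f
  have hexp : NormedSpace.exp (-A) = cfc (fun x ↦ exp (-x)) A := by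
    rw [cfc_comp_neg exp A, CFC.real_exp_eq_normedSpace_exp]
  have hinv : A⁻¹ = cfc (·⁻¹ : ℝ → ℝ) A := by
    rw [Matrix.nonsing_inv_eq_ringInverse, cfc_ringInverse_id A hA.isUnit]
  rw [hexp, hinv, ← cfc_const_one ℝ A, ← cfc_sub _ _ A (hcont _) (hcont _),
    ← cfc_mul _ _ A (hcont _) (hcont _), ← cfc_sub _ _ A (hcont _) (hcont _)]
  rfl

theorem candy_wrapper_stmt5_general
    (n : ℕ) (A : Matrix (Fin n) (Fin n) ℝ)
    (hA_pos : A.PosDef)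
    (L : Matrix (Fin n) (Fin n) ℝ)
    (hL : L = NormedSpace.exp (-A) - A⁻¹ * (1 - NormedSpace.exp (-A))) :
    L.IsSymm ∧ ‖Matrix.toEuclideanCLM (𝕜 := ℝ) L‖ < 0.3 := by
  rw [hL, ← hA_pos.cfc_averagingMultiplier]
  refine ⟨Matrix.isHermitian_iff_isSymm.mp (cfc_predicate _ A), ?_⟩
  exact hA_pos.isHermitian.l2_opNorm_cfc_lt (by norm_num) fun i ↦
    abs_averagingMultiplier_lt (hA_pos.eigenvalues_pos i)

/-- For a symmetric positive definite real `n × n` matrix `A`, the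
linear part `L = exp(-A) - A⁻¹ (I - exp(-A))` of one step of the averaging scheme is a
symmetric matrix whose operator norm (with respect to the Euclidean norm on `ℝⁿ`) is
smaller than `0.3`. -/
theorem candy_wrapper_stmt5
    (n : ℕ) (A : Matrix (Fin n) (Fin n) ℝ)
    (hA_symm : A.IsSymm) (hA_pos : A.PosDef)
    (L : Matrix (Fin n) (Fin n) ℝ)
    (hL : L = NormedSpace.exp (-A) - A⁻¹ * (1 - NormedSpace.exp (-A))) :
    L.IsSymm ∧ ‖Matrix.toEuclideanCLM (𝕜 := ℝ) L‖ < 0.3 :=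
  candy_wrapper_stmt5_general n A hA_pos L hL
end

section
/- Let A be a symmetric positive definite real n×n matrix, let f : ℝ → ℝⁿ be continuous and 1-periodic, and let u₀^π be the initial value of the unique 1-periodic solution of u' = -A u + f. Define the averaging iteration: given an initial guess v₀^{l-1} ∈ ℝⁿ, let u^l be the solution of u' = -A u + f with u^l(0) = v₀^{l-1}, solve A w̄^l = u^l(1) - u^l(0), and set v₀^l := u^l(1) + w̄^l. Then for every l ≥ 1, ‖v₀^l - u₀^π‖ ≤ 0.3 · ‖v₀^{l-1} - u₀^π‖; in particular, the iterates v₀^l converge to u₀^π geometrically with a rate independent of A and f. -/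
/-!
Since `uπ` is a periodic solution, `d = u - uπ` solves `d' = -A d`, so one averaging step maps
the error `e = v - uπ(0)` to `(e^{-A} + A⁻¹ (e^{-A} - 1)) e`. In an orthonormal eigenbasis of `A`
this acts on the eigenvalue-`μ` component by `averagingFactor μ = ((1 + μ) e^{-μ} - 1) / μ`,
which lies in `[-0.3, 0]` for every `μ > 0`: the upper bound is `1 + μ ≤ e^μ`, the lower bound
`1 - 0.3 μ ≤ (1 + μ) e^{-μ}` follows on `[0, 3]` from the degree-9 Taylor lower bound of `e^{-μ}`
(the minimum of the factor is about `-0.298`, so the margin is thin), on `[3, 10/3]` from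
`e^{-10/3} ≥ 1/40`, and trivially beyond.
-/

open Real RealInnerProductSpace Finset Filter Topology
open scoped Nat

lemma hasDerivAt_sum_range_succ_neg_pow_div_factorial (n : ℕ) (x : ℝ) :
    HasDerivAt (fun y : ℝ => ∑ i ∈ range (n + 1), (-y) ^ i / i !)
      (-∑ i ∈ range n, (-x) ^ i / i !) x := by
  induction n with
  | zero => simpa using hasDerivAt_const x (1 : ℝ)
  | succ n ih =>
    simp_rw [sum_range_succ _ (n + 1)]
    refine (ih.add (((hasDerivAt_neg x).pow (n + 1)).div_const _)).congr_deriv ?_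
    rw [sum_range_succ, Nat.factorial_succ]
    push_cast
    field_simp
    ring

lemma neg_one_pow_mul_exp_neg_sub_sum_nonneg (n : ℕ) {x : ℝ} (hx : 0 ≤ x) :
    0 ≤ (-1) ^ n * (exp (-x) - ∑ i ∈ range n, (-x) ^ i / i !) := by
  induction n generalizing x with
  | zero => simpa using (exp_pos _).le
  | succ n ih =>
    set g : ℝ → ℝ := fun y => (-1) ^ (n + 1) * (exp (-y) - ∑ i ∈ range (n + 1), (-y) ^ i / i !)
    have hg : ∀ y, HasDerivAt g ((-1) ^ n * (exp (-y) - ∑ i ∈ range n, (-y) ^ i / i !)) y :=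
      fun y => ((((hasDerivAt_neg y).exp).sub
        (hasDerivAt_sum_range_succ_neg_pow_div_factorial n y)).const_mul _).congr_deriv
          (by ring)
    have hmono : MonotoneOn g (Set.Ici 0) := by
      refine monotoneOn_of_hasDerivWithinAt_nonneg (convex_Ici 0)
        (fun y _ => (hg y).continuousAt.continuousWithinAt)
        (fun y _ => (hg y).hasDerivWithinAt) fun y hy => ih (le_of_lt (by simpa using hy))
    have hg0 : g 0 = 0 := by simp [g, sum_range_succ']
    simpa [hg0] using hmono Set.self_mem_Ici hx hx

lemma one_fortieth_le_exp_neg : 1 / 40 ≤ exp (-(10 / 3)) := by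
  have h : exp (-(10 / 3)) = exp (-1) ^ 3 * exp (-(1 / 3)) := by
    rw [← exp_nat_mul, ← exp_add]; norm_num
  have h1 : 1 - 1 / 3 ≤ exp (-(1 / 3)) := by linarith [add_one_le_exp (-(1 / 3))]
  rw [h]
  calc (1 / 40 : ℝ) ≤ 0.36787944116 ^ 3 * (1 - 1 / 3) := by norm_num
    _ ≤ exp (-1) ^ 3 * exp (-(1 / 3)) := by gcongr; exact exp_neg_one_gt_d9.le

lemma one_sub_mul_le_one_add_mul_exp_neg {μ : ℝ} (hμ : 0 ≤ μ) :
    1 - 0.3 * μ ≤ (1 + μ) * exp (-μ) := by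
  rcases le_or_gt μ 3 with h3 | h3
  · have htaylor : 1 - μ + μ ^ 2 / 2 - μ ^ 3 / 6 + μ ^ 4 / 24 - μ ^ 5 / 120 + μ ^ 6 / 720
        - μ ^ 7 / 5040 + μ ^ 8 / 40320 - μ ^ 9 / 362880 ≤ exp (-μ) := by
      have := neg_one_pow_mul_exp_neg_sub_sum_nonneg 10 hμ
      simp only [sum_range_succ, sum_range_zero, Nat.factorial] at this
      norm_num at this
      linarith
    -- `(1 + μ)` times the Taylor bound, minus `1 - 0.3 * μ`, is `μ / 362880` times this polynomial
    have hpoly : 0 ≤ 108864 - 181440 * μ + 120960 * μ ^ 2 - 45360 * μ ^ 3 + 12096 * μ ^ 4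
        - 2520 * μ ^ 5 + 432 * μ ^ 6 - 63 * μ ^ 7 + 8 * μ ^ 8 - μ ^ 9 := by
      nlinarith [sq_nonneg (μ - 9 / 5), sq_nonneg (μ ^ 2 - 3 * μ),
        sq_nonneg (μ ^ 2 - 18 / 5 * μ + 2), mul_nonneg hμ (sub_nonneg.2 h3), sq_nonneg (μ * (3 - μ)), sq_nonneg ((μ - 2) * (3 - μ)),
        sq_nonneg (μ - 2), sq_nonneg (μ - 1), mul_nonneg (mul_nonneg hμ hμ) (sub_nonneg.2 h3),
        sq_nonneg (μ ^ 3 - 5 * μ ^ 2 + 6 * μ)]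
    nlinarith [mul_nonneg hμ hpoly, mul_le_mul_of_nonneg_left htaylor (by linarith : 0 ≤ 1 + μ)]
  rcases le_or_gt μ (10 / 3) with h103 | h103
  · have : exp (-(10 / 3)) ≤ exp (-μ) := exp_le_exp.2 (by linarith)
    nlinarith [one_fortieth_le_exp_neg]
  · nlinarith [exp_pos (-μ)]

noncomputable def averagingFactor (μ : ℝ) : ℝ := exp (-μ) + (exp (-μ) - 1) / μ

lemma averagingFactor_eq {μ : ℝ} (hμ : μ ≠ 0) :
    averagingFactor μ = ((1 + μ) * exp (-μ) - 1) / μ := by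
  rw [averagingFactor]
  field_simp
  ring

lemma abs_averagingFactor_le {μ : ℝ} (hμ : 0 < μ) : |averagingFactor μ| ≤ 0.3 := by
  rw [averagingFactor_eq hμ.ne', abs_le, le_div_iff₀ hμ, div_le_iff₀ hμ]
  have hexp : (1 + μ) * exp (-μ) ≤ 1 := by
    rw [exp_neg, ← div_eq_mul_inv, div_le_one (exp_pos μ)]
    linarith [add_one_le_exp μ]
  constructor <;> nlinarith [one_sub_mul_le_one_add_mul_exp_neg hμ.le]

lemma eq_exp_neg_mul_of_hasDerivAt {y : ℝ → ℝ} {c : ℝ} (hy : ∀ t, HasDerivAt y (-c * y t) t)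
    (t : ℝ) : y t = exp (-(c * t)) * y 0 := by
  have hconst : ∀ s, HasDerivAt (fun s => exp (c * s) * y s) 0 s := fun s =>
    ((((hasDerivAt_id s).const_mul c).exp).mul (hy s)).congr_deriv (by ring)
  have := is_const_of_deriv_eq_zero (fun s => (hconst s).differentiableAt)
    (fun s => (hconst s).deriv) t 0
  simp only [mul_zero, exp_zero, one_mul] at this
  rw [← this, exp_neg, ← mul_assoc, inv_mul_cancel₀ (exp_pos _).ne', one_mul]

section InnerProductSpace

variable {E : Type*} [NormedAddCommGroup E] [InnerProductSpace ℝ E]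

lemma inner_add_eq_averagingFactor_mul {T : E →ₗ[ℝ] E} (hT : T.IsSymmetric) {b : E} {μ : ℝ}
    (hb : T b = μ • b) (hμ : μ ≠ 0) {d : ℝ → E} (hd : ∀ t, HasDerivAt d (-T (d t)) t) {w : E}
    (hw : T w = d 1 - d 0) :
    ⟪b, d 1 + w⟫ = averagingFactor μ * ⟪b, d 0⟫ := by
  have hinner : ∀ x, ⟪b, T x⟫ = μ * ⟪b, x⟫ := fun x => by
    rw [← hT, hb, real_inner_smul_left]
  have hy : ∀ t, HasDerivAt (fun t => ⟪b, d t⟫) (-μ * ⟪b, d t⟫) t := fun t =>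
    ((innerSL ℝ b).hasFDerivAt.comp_hasDerivAt t (hd t)).congr_deriv (by
      simp [inner_neg_right, hinner])
  have hy1 : ⟪b, d 1⟫ = exp (-μ) * ⟪b, d 0⟫ := by
    simpa using eq_exp_neg_mul_of_hasDerivAt hy 1
  have hbw : ⟪b, w⟫ = (⟪b, d 1⟫ - ⟪b, d 0⟫) / μ := by
    rw [eq_div_iff hμ, mul_comm, ← hinner, hw, inner_sub_right]
  rw [inner_add_right, hbw, hy1, averagingFactor]
  ring

lemma OrthonormalBasis.norm_le_of_abs_inner_le {ι : Type*} [Fintype ι]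
    (b : OrthonormalBasis ι ℝ E) {x y : E} {r : ℝ} (hr : 0 ≤ r)
    (h : ∀ i, |⟪b i, y⟫| ≤ r * |⟪b i, x⟫|) : ‖y‖ ≤ r * ‖x‖ := by
  refine le_of_pow_le_pow_left₀ two_ne_zero (by positivity) ?_
  rw [mul_pow, ← b.sum_sq_inner_right, ← b.sum_sq_inner_right, mul_sum]
  refine sum_le_sum fun i _ => ?_
  rw [← sq_abs, ← sq_abs ⟪b i, x⟫, ← mul_pow]
  exact pow_le_pow_left₀ (abs_nonneg _) (h i) 2

theorem norm_averagingStep_le {ι : Type*} [Fintype ι] {T : E →ₗ[ℝ] E} (hT : T.IsSymmetric)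
    (b : OrthonormalBasis ι ℝ E) {μ : ι → ℝ} (hb : ∀ i, T (b i) = μ i • b i)
    (hμ : ∀ i, 0 < μ i) {d : ℝ → E} (hd : ∀ t, HasDerivAt d (-T (d t)) t) {w : E}
    (hw : T w = d 1 - d 0) : ‖d 1 + w‖ ≤ 0.3 * ‖d 0‖ :=
  b.norm_le_of_abs_inner_le (by norm_num) fun i => by
    rw [inner_add_eq_averagingFactor_mul hT (hb i) (hμ i).ne' hd hw, abs_mul]
    exact mul_le_mul_of_nonneg_right (abs_averagingFactor_le (hμ i)) (abs_nonneg _)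

end InnerProductSpace

lemma Matrix.IsHermitian.toEuclideanLin_eigenvectorBasis {n : Type*} [Fintype n] [DecidableEq n]
    {A : Matrix n n ℝ} (hA : A.IsHermitian) (i : n) :
    A.toEuclideanLin (hA.eigenvectorBasis i) = hA.eigenvalues i • hA.eigenvectorBasis i := by
  ext j
  simpa [Matrix.toLpLin_apply] using congrFun (hA.mulVec_eigenvectorBasis i) j

theorem candy_wrapper_stmt6_general
    (n : ℕ) (A : Matrix (Fin n) (Fin n) ℝ)
    (hA_pos : A.PosDef)
    (f : ℝ → EuclideanSpace ℝ (Fin n))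
    (uπ : ℝ → EuclideanSpace ℝ (Fin n))
    (huπ_sol : ∀ t : ℝ, HasDerivAt uπ (-(Matrix.toEuclideanLin A (uπ t)) + f t) t)
    (huπ_per : Function.Periodic uπ 1)
    -- the averaging iteration: `u l` is the trajectory started from the guess `v l`,
    -- `w l` the averaging correction, and `v (l+1)` the updated initial value
    (u : ℕ → ℝ → EuclideanSpace ℝ (Fin n))
    (v : ℕ → EuclideanSpace ℝ (Fin n))
    (w : ℕ → EuclideanSpace ℝ (Fin n))
    (hu_sol : ∀ l : ℕ, ∀ t : ℝ,
      HasDerivAt (u l) (-(Matrix.toEuclideanLin A (u l t)) + f t) t)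
    (hu_init : ∀ l : ℕ, u l 0 = v l)
    (hw : ∀ l : ℕ, Matrix.toEuclideanLin A (w l) = u l 1 - u l 0)
    (hv : ∀ l : ℕ, v (l + 1) = u l 1 + w l) :
    (∀ l : ℕ, ‖v (l + 1) - uπ 0‖ ≤ 0.3 * ‖v l - uπ 0‖) ∧
    (∀ l : ℕ, ‖v l - uπ 0‖ ≤ 0.3 ^ l * ‖v 0 - uπ 0‖) ∧
    Tendsto v atTop (𝓝 (uπ 0)) := by
  have hT : (Matrix.toEuclideanLin A).IsSymmetric :=
    Matrix.isSymmetric_toEuclideanLin_iff.2 hA_pos.isHermitian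
  have huπ1 : uπ 1 = uπ 0 := by simpa using huπ_per 0
  have hstep (l : ℕ) : ‖v (l + 1) - uπ 0‖ ≤ 0.3 * ‖v l - uπ 0‖ := by
    have hd (t : ℝ) : HasDerivAt (fun t => u l t - uπ t)
        (-(Matrix.toEuclideanLin A (u l t - uπ t))) t :=
      ((hu_sol l t).sub (huπ_sol t)).congr_deriv (by rw [map_sub]; abel)
    have hcontract := norm_averagingStep_le hT hA_pos.isHermitian.eigenvectorBasis
      hA_pos.isHermitian.toEuclideanLin_eigenvectorBasis hA_pos.eigenvalues_pos hd
      (w := w l) (by rw [hw, huπ1]; abel)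
    rwa [huπ1, hu_init, sub_add_eq_add_sub, ← hv] at hcontract
  have hgeom (l : ℕ) : ‖v l - uπ 0‖ ≤ 0.3 ^ l * ‖v 0 - uπ 0‖ :=
    le_geom (u := fun l => ‖v l - uπ 0‖) (by norm_num) l fun k _ => hstep k
  refine ⟨hstep, hgeom, tendsto_iff_norm_sub_tendsto_zero.2 ?_⟩
  exact squeeze_zero (fun _ => norm_nonneg _) hgeom
    (by simpa using (tendsto_pow_atTop_nhds_zero_of_lt_one (r := (0.3 : ℝ)) (by norm_num)
      (by norm_num)).mul_const ‖v 0 - uπ 0‖)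

/-- Convergence of the averaging scheme in the continuous linear
setting.  For the model problem `u' = -A u + f` with `A` symmetric positive definite
and `f` continuous `1`-periodic, one step of the averaging iteration (integrate one
cycle from the current initial guess `v l`, solve `A w̄ = u(1) - u(0)`, and set the new
initial value to `u(1) + w̄`) contracts the distance to the initial value `uπ(0)` of
the unique `1`-periodic solution by the factor `0.3`, independently of `A` and `f`;
in particular the iterates converge geometrically to `uπ(0)`. -/
theorem candy_wrapper_stmt6
    (n : ℕ) (A : Matrix (Fin n) (Fin n) ℝ)
    (hA_symm : A.IsSymm) (hA_pos : A.PosDef)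
    (f : ℝ → EuclideanSpace ℝ (Fin n))
    (hf_cont : Continuous f) (hf_per : Function.Periodic f 1)
    (uπ : ℝ → EuclideanSpace ℝ (Fin n))
    (huπ_sol : ∀ t : ℝ, HasDerivAt uπ (-(Matrix.toEuclideanLin A (uπ t)) + f t) t)
    (huπ_per : Function.Periodic uπ 1)
    -- the averaging iteration: `u l` is the trajectory started from the guess `v l`,
    -- `w l` the averaging correction, and `v (l+1)` the updated initial value
    (u : ℕ → ℝ → EuclideanSpace ℝ (Fin n))
    (v : ℕ → EuclideanSpace ℝ (Fin n))
    (w : ℕ → EuclideanSpace ℝ (Fin n))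
    (hu_sol : ∀ l : ℕ, ∀ t : ℝ,
      HasDerivAt (u l) (-(Matrix.toEuclideanLin A (u l t)) + f t) t)
    (hu_init : ∀ l : ℕ, u l 0 = v l)
    (hw : ∀ l : ℕ, Matrix.toEuclideanLin A (w l) = u l 1 - u l 0)
    (hv : ∀ l : ℕ, v (l + 1) = u l 1 + w l) :
    (∀ l : ℕ, ‖v (l + 1) - uπ 0‖ ≤ 0.3 * ‖v l - uπ 0‖) ∧
    (∀ l : ℕ, ‖v l - uπ 0‖ ≤ 0.3 ^ l * ‖v 0 - uπ 0‖) ∧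
    Tendsto v atTop (𝓝 (uπ 0)) :=
  candy_wrapper_stmt6_general n A hA_pos f uπ huπ_sol huπ_per u v w hu_sol hu_init hw hv
end
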